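/- Over 𝔽₂, the cubic threefold X = V₊(f) ⊂ ℙ⁴ with f = x₃²x₀ + x₃x₄x₁ + x₄²x₂ + x₃(x₀² + x₁²) + x₄(x₁² + x₂²) + x₀x₂² + x₂x₀² is smooth, i.e. there is no point of ℙ⁴ over the algebraic closure of 𝔽₂ at which f and all its partial derivatives vanish simultaneously. -/

import Mathlib

open MvPolynomial

/-- The cubic form `f = x₃²x₀ + x₃x₄x₁ + x₄²x₂ + x₃(x₀² + x₁²) + x₄(x₁² + x₂²)
+ x₀x₂² + x₂x₀²` over `𝔽₂`. -/
noncomputable def fermatLikeCubic : MvPolynomial (Fin 5) (ZMod 2) :=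
  X 3 ^ 2 * X 0 + X 3 * X 4 * X 1 + X 4 ^ 2 * X 2 +
    X 3 * (X 0 ^ 2 + X 1 ^ 2) + X 4 * (X 1 ^ 2 + X 2 ^ 2) +
    X 0 * X 2 ^ 2 + X 2 * X 0 ^ 2

/-!
Squaring is injective in characteristic 2, so `∂₀f = ∂₂f = 0` give `x₃ = x₂` and `x₄ = x₀`,
and `∂₁f = x₃x₄ = 0` makes one of these pairs vanish. If `x₃ = x₂ = 0`, then `∂₄f` reduces to
`x₁²` and then `∂₃f` to `x₀²`; the other case is the same after the symmetry `x₀ ↔ x₂`,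
`x₃ ↔ x₄` of `f`. So the partials alone have no common nonzero zero.
-/

theorem CharTwo.eq_of_sq_add_sq_eq_zero {R : Type*} [CommRing R] [CharP R 2] [NoZeroDivisors R]
    {x y : R} (h : x ^ 2 + y ^ 2 = 0) : x = y :=
  sq_inj.mp (CharTwo.add_eq_zero.mp h)

namespace fermatLikeCubic

theorem pderiv_zero : pderiv 0 fermatLikeCubic = X 3 ^ 2 + X 2 ^ 2 := by
  simp [fermatLikeCubic, pderiv_X, CharTwo.two_eq_zero]

theorem pderiv_one : pderiv 1 fermatLikeCubic = X 3 * X 4 := by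
  simp [fermatLikeCubic, pderiv_X, CharTwo.two_eq_zero]

theorem pderiv_two : pderiv 2 fermatLikeCubic = X 4 ^ 2 + X 0 ^ 2 := by
  simp [fermatLikeCubic, pderiv_X, CharTwo.two_eq_zero]

theorem pderiv_three : pderiv 3 fermatLikeCubic = X 4 * X 1 + X 0 ^ 2 + X 1 ^ 2 := by
  simp [fermatLikeCubic, pderiv_X, CharTwo.two_eq_zero]
  ring

theorem pderiv_four : pderiv 4 fermatLikeCubic = X 3 * X 1 + X 1 ^ 2 + X 2 ^ 2 := by
  simp [fermatLikeCubic, pderiv_X, CharTwo.two_eq_zero]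
  ring

section CharTwoDomain

variable {R : Type*} [CommRing R] [CharP R 2] [NoZeroDivisors R]

theorem eq_zero_of_partials_of_eq_zero {x₀ x₁ x₂ x₃ x₄ : R}
    (h₀ : x₃ ^ 2 + x₂ ^ 2 = 0) (h₂ : x₄ ^ 2 + x₀ ^ 2 = 0)
    (h₃ : x₄ * x₁ + x₀ ^ 2 + x₁ ^ 2 = 0) (h₄ : x₃ * x₁ + x₁ ^ 2 + x₂ ^ 2 = 0) (hx₃ : x₃ = 0) :
    x₀ = 0 ∧ x₁ = 0 ∧ x₂ = 0 ∧ x₃ = 0 ∧ x₄ = 0 := by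
  have hx₂ : x₂ = 0 := (CharTwo.eq_of_sq_add_sq_eq_zero h₀).symm.trans hx₃
  have hx₁ : x₁ = 0 := pow_eq_zero_iff two_ne_zero |>.mp <| by
    simpa [hx₃, hx₂] using h₄
  have hx₀ : x₀ = 0 := pow_eq_zero_iff two_ne_zero |>.mp <| by
    simpa [hx₁] using h₃
  exact ⟨hx₀, hx₁, hx₂, hx₃, (CharTwo.eq_of_sq_add_sq_eq_zero h₂).trans hx₀⟩

theorem eq_zero_of_partials {x₀ x₁ x₂ x₃ x₄ : R}
    (h₀ : x₃ ^ 2 + x₂ ^ 2 = 0) (h₁ : x₃ * x₄ = 0) (h₂ : x₄ ^ 2 + x₀ ^ 2 = 0)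
    (h₃ : x₄ * x₁ + x₀ ^ 2 + x₁ ^ 2 = 0) (h₄ : x₃ * x₁ + x₁ ^ 2 + x₂ ^ 2 = 0) :
    x₀ = 0 ∧ x₁ = 0 ∧ x₂ = 0 ∧ x₃ = 0 ∧ x₄ = 0 := by
  rcases mul_eq_zero.mp h₁ with hx₃ | hx₄
  · exact eq_zero_of_partials_of_eq_zero h₀ h₂ h₃ h₄ hx₃
  · obtain ⟨hx₂, hx₁, hx₀, hx₄, hx₃⟩ := eq_zero_of_partials_of_eq_zero (x₁ := x₁) h₂ h₀
      (by linear_combination h₄) (by linear_combination h₃) hx₄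
    exact ⟨hx₀, hx₁, hx₂, hx₃, hx₄⟩

end CharTwoDomain

theorem eq_zero_of_aeval_pderiv_eq_zero {R : Type*} [CommRing R] [IsDomain R]
    [Algebra (ZMod 2) R] {a : Fin 5 → R} (h : ∀ i, aeval a (pderiv i fermatLikeCubic) = 0) :
    a = 0 := by
  have : CharP R 2 := (Algebra.charP_iff (ZMod 2) R 2).mp inferInstance
  have h₀ := h 0
  have h₁ := h 1
  have h₂ := h 2
  have h₃ := h 3
  have h₄ := h 4
  simp only [pderiv_zero, pderiv_one, pderiv_two, pderiv_three, pderiv_four, map_add, map_mul,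
    map_pow, aeval_X] at h₀ h₁ h₂ h₃ h₄
  obtain ⟨ha₀, ha₁, ha₂, ha₃, ha₄⟩ := eq_zero_of_partials h₀ h₁ h₂ h₃ h₄
  ext i
  fin_cases i <;> assumption

end fermatLikeCubic

/-- The cubic threefold `V₊(f) ⊂ ℙ⁴` over `𝔽₂`, with
`f = x₃²x₀ + x₃x₄x₁ + x₄²x₂ + x₃(x₀² + x₁²) + x₄(x₁² + x₂²) + x₀x₂² + x₂x₀²`,
is smooth: there is no nonzero point over the algebraic closure of `𝔽₂` at which `f`
and all of its partial derivatives vanish simultaneously (Jacobian criterion). -/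
theorem fermatLikeCubic_smooth :
    ∀ a : Fin 5 → AlgebraicClosure (ZMod 2), a ≠ 0 →
      ¬ (MvPolynomial.aeval a fermatLikeCubic = 0 ∧
          ∀ i : Fin 5, MvPolynomial.aeval a (MvPolynomial.pderiv i fermatLikeCubic) = 0) :=
  fun _ ha ⟨_, hpderiv⟩ => ha (fermatLikeCubic.eq_zero_of_aeval_pderiv_eq_zero hpderiv)
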